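/- arXiv:2411.19243 — 3 statements merged into one kernel-verified Lean document; each statement's English description precedes it below -/
import Mathlib

section
/- Let n = kp with the basis e_i = {t_i} - {t_1} (i = 2,...,n) of the Specht module S^{(n-1,1)} over a field F of characteristic p, and let g_1 = (1,2,...,p). Then for b_1 = e_2 and 0 ≤ r ≤ p-2, setting X_1 = g_1 - 1 in FS_n, one has X_1^r b_1 = Σ_{s=1}^{r+1} (-1)^{r-s+1} binom(r+1, s) e_{s+1}. -/
/-- The inverse of the `p`-cycle `g_1 = (1,2,…,p)` as a function on `{1,…,n}` (0-indexed as
`Fin n`): it sends `j ↦ j - 1 (mod p)` for `j < p` and fixes everything else. -/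
def g1inv (p n : ℕ) (hp : 0 < p) (hpn : p ≤ n) (j : Fin n) : Fin n :=
  if (j : ℕ) < p then ⟨((j : ℕ) + (p - 1)) % p, lt_of_lt_of_le (Nat.mod_lt _ hp) hpn⟩ else j

/-- The action of the `p`-cycle `g_1` on the tabloid basis of the permutation module
`M^{(n-1,1)} = (Fin n → F)`: `(g·v)_j = v_{g⁻¹ j}`, i.e. `g` sends tabloid `t_j` to `t_{g j}`. -/
def g1act (F : Type*) [Field F] (p n : ℕ) (hp : 0 < p) (hpn : p ≤ n) :
    (Fin n → F) →ₗ[F] (Fin n → F) where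
  toFun v := fun j => v (g1inv p n hp hpn j)
  map_add' _ _ := rfl
  map_smul' _ _ := rfl

/-- `X_1 = g_1 - 1` acting on the permutation module. -/
def X1 (F : Type*) [Field F] (p n : ℕ) (hp : 0 < p) (hpn : p ≤ n) :
    (Fin n → F) →ₗ[F] (Fin n → F) :=
  g1act F p n hp hpn - LinearMap.id

/-- The vector `e_i = t_i - t_1` of the Specht module `S^{(n-1,1)}` (here `i : Fin n` is the
0-indexed version of the paper's `1`-based index, so `eVec i` is the paper's `e_{i+1}`). -/
def eVec (F : Type*) [Field F] (n : ℕ) (hn : 0 < n) (i : Fin n) : Fin n → F :=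
  Pi.single i 1 - Pi.single ⟨0, hn⟩ 1

/-! Since `e_2 = t_2 - t_1 = X_1 t_1`, we get `X_1^r e_2 = (g_1 - 1)^(r+1) t_1`, which the binomial
theorem expands as `Σ_m (-1)^(r+1-m) C(r+1, m) t_{m+1}`, because `g_1^m t_1 = t_{m+1}` for
`m ≤ r + 1 < p`. These coefficients add up to `(1 - 1)^(r+1) = 0`, so the sum can be rewritten in
terms of the differences `e_{m+1} = t_{m+1} - t_1`. -/

theorem Module.End.sub_one_pow_apply {R M : Type*} [CommRing R] [AddCommGroup M] [Module R M]
    (g : Module.End R M) (N : ℕ) (v : M) :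
    ((g - 1) ^ N) v =
      ∑ m ∈ Finset.range (N + 1), ((-1 : R) ^ (N - m) * N.choose m) • (g ^ m) v := by
  rw [sub_eq_add_neg, (Commute.neg_one_right g).add_pow, LinearMap.sum_apply]
  refine Finset.sum_congr rfl fun m _ => ?_
  rw [← map_one (algebraMap R _), ← map_neg, ← map_pow]
  simp only [Module.End.mul_apply, Module.End.natCast_apply, Module.algebraMap_end_apply, map_nsmul,
    map_smul, mul_smul, Nat.cast_smul_eq_nsmul]
  exact smul_comm _ _ _

theorem Fin.sum_smul_eq_sum_smul_sub_of_sum_eq_zero {R M : Type*} [Ring R] [AddCommGroup M]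
    [Module R M] {N : ℕ} (c : Fin (N + 1) → R) (w : Fin (N + 1) → M) (hc : ∑ m, c m = 0) :
    ∑ m, c m • w m = ∑ s : Fin N, c s.succ • (w s.succ - w 0) := by
  rw [Fin.sum_univ_succ] at hc ⊢
  simp only [smul_sub, Finset.sum_sub_distrib, ← Finset.sum_smul, eq_neg_of_add_eq_zero_right hc]
  rw [neg_smul, sub_neg_eq_add, add_comm]

theorem sum_neg_one_pow_sub_mul_choose {R : Type*} [CommRing R] {N : ℕ} (hN : N ≠ 0) :
    ∑ m : Fin (N + 1), (-1 : R) ^ (N - m) * N.choose m = 0 := by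
  have := (add_pow (1 : R) (-1) N).symm
  rw [add_neg_cancel, zero_pow hN, ← Fin.sum_univ_eq_sum_range] at this
  simpa using this

theorem g1inv_eq_iff {p n : ℕ} (hp : 0 < p) (hpn : p ≤ n) {i : ℕ} (hi : i + 1 < p)
    (j : Fin n) :
    g1inv p n hp hpn j = ⟨i, by omega⟩ ↔ j = ⟨i + 1, by omega⟩ := by
  obtain ⟨j, hj⟩ := j
  have hval : (g1inv p n hp hpn ⟨j, hj⟩ : ℕ) = if j < p then (j + (p - 1)) % p else j := by
    unfold g1inv; split_ifs <;> rfl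
  simp only [Fin.ext_iff, hval]
  split_ifs with hjp
  · rcases Nat.eq_zero_or_pos j with rfl | hj0
    · rw [zero_add, Nat.mod_eq_of_lt (by omega)]
      omega
    · rw [show j + (p - 1) = j - 1 + p by omega, Nat.add_mod_right, Nat.mod_eq_of_lt (by omega)]
      omega
  · omega

theorem g1act_single {F : Type*} [Field F] {p n : ℕ} (hp : 0 < p) (hpn : p ≤ n) {i : ℕ}
    (hi : i + 1 < p) :
    g1act F p n hp hpn (Pi.single ⟨i, by omega⟩ 1) = Pi.single ⟨i + 1, by omega⟩ 1 := by
  ext j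
  simp only [g1act, LinearMap.coe_mk, AddHom.coe_mk, Pi.single_apply, g1inv_eq_iff hp hpn hi]

theorem g1act_pow_single_zero {F : Type*} [Field F] {p n : ℕ} (hp : 0 < p) (hpn : p ≤ n)
    {m : ℕ} (hm : m < p) :
    (g1act F p n hp hpn ^ m) (Pi.single ⟨0, by omega⟩ 1) = Pi.single ⟨m, by omega⟩ 1 := by
  induction m with
  | zero => rfl
  | succ m ih => rw [pow_succ', Module.End.mul_apply, ih (by omega), g1act_single hp hpn hm]

theorem X1_apply_single_zero {F : Type*} [Field F] {p n : ℕ} (hp : 1 < p) (hpn : p ≤ n) :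
    X1 F p n (by omega) hpn (Pi.single ⟨0, by omega⟩ 1) =
      eVec F n (by omega) ⟨1, by omega⟩ := by
  simp only [X1, LinearMap.sub_apply, g1act_single _ hpn hp, LinearMap.id_apply, eVec]

theorem X1_pow_single_zero {F : Type*} [Field F] {p n N : ℕ} (hp : 0 < p) (hpn : p ≤ n)
    (hN : N < p) :
    (X1 F p n hp hpn ^ N) (Pi.single ⟨0, by omega⟩ 1) =
      ∑ m : Fin (N + 1), ((-1 : F) ^ (N - m) * N.choose m) • Pi.single ⟨m, by omega⟩ 1 := by
  rw [X1, ← Module.End.one_eq_id, Module.End.sub_one_pow_apply, Finset.sum_range]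
  refine Finset.sum_congr rfl fun m _ => ?_
  rw [g1act_pow_single_zero hp hpn (by omega)]

/-- Let `n = kp`, `F` of characteristic `p`, and `b_1 = e_2` in the Specht
module `S^{(n-1,1)}` spanned by the `e_i = t_i - t_1`.  Then for `0 ≤ r ≤ p - 2`,
`X_1^r b_1 = Σ_{s=1}^{r+1} (-1)^{r-s+1} C(r+1, s) e_{s+1}`
(the sum below is reindexed by `s = s' + 1` with `s' : Fin (r+1)`, so that the sign
`(-1)^{r-s+1}` becomes `(-1)^{r-s'}`). -/
theorem stmt7 (F : Type*) [Field F] (p k r : ℕ) (hp : p.Prime)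
    (hr : r ≤ p - 2) (hpn : p ≤ k * p) (hn : 0 < k * p) :
    ((X1 F p (k * p) hp.pos hpn) ^ r) (eVec F (k * p) hn ⟨1, lt_of_lt_of_le hp.two_le hpn⟩) =
      ∑ s : Fin (r + 1),
        (((-1 : F) ^ (r - (s : ℕ))) * ((r + 1).choose ((s : ℕ) + 1) : F)) •
          eVec F (k * p) hn ⟨(s : ℕ) + 1, by
            have h1 := s.2
            have h2 := hp.two_le
            omega⟩ := by
  have hrp : r + 1 < p := by have := hp.two_le; omega
  rw [← X1_apply_single_zero hp.one_lt hpn, ← Module.End.mul_apply, ← pow_succ,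
    X1_pow_single_zero hp.pos hpn hrp,
    Fin.sum_smul_eq_sum_smul_sub_of_sum_eq_zero _ _
      (sum_neg_one_pow_sub_mul_choose r.add_one_ne_zero)]
  simp only [Fin.val_succ, Fin.val_zero, Nat.add_sub_add_right, eVec]
end

section
/- Let p be an odd prime, k ≥ 2, and L the (kp-1)×(kp-1) block upper-triangular matrix over a field F of characteristic p whose diagonal blocks are the single nilpotent Jordan-type blocks: L(1,1) of size (p-1) with subdiagonal entries α_1, and L(i,i) of size p with subdiagonal entries α_i for 2 ≤ i ≤ k, and whose only other nonzero blocks are L(1,i) for 2 ≤ i ≤ k having entries -α_1 in positions (1,1) and (2,1). Then rank(L) ≤ (k-1)(p-1) + (p-2), with equality if and only if α_1 α_2 ⋯ α_k ≠ 0. -/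
/-- The block index of global row/column `j` of the `(kp-1) × (kp-1)` matrix `L`: block `0` has
size `p - 1` and the remaining blocks have size `p`. -/
def blkIdx (p j : ℕ) : ℕ := if j < p - 1 then 0 else (j - (p - 1)) / p + 1

/-- The position within its block of global row/column `j`. -/
def posIdx (p j : ℕ) : ℕ := if j < p - 1 then j else (j - (p - 1)) % p

/-- The block upper-triangular matrix `L` (the matrix of `X_α` on the Specht module
`S^{(kp-1,1)}`): the diagonal blocks are nilpotent Jordan-type blocks, of size `p - 1` with
subdiagonal entries `α_1` for the first block and of size `p` with subdiagonal entries `α_i`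
for the `i`-th block (`2 ≤ i ≤ k`); the only other nonzero blocks are `L(1,i)` for
`2 ≤ i ≤ k`, having entries `-α_1` in positions `(1,1)` and `(2,1)`.  (`α` is `0`-indexed,
so `α_i` is `α (i-1)`.) -/
def Lmat (F : Type*) [Field F] (p k : ℕ) (α : ℕ → F) :
    Matrix (Fin (k * p - 1)) (Fin (k * p - 1)) F :=
  fun i j =>
    if blkIdx p (i : ℕ) = blkIdx p (j : ℕ) ∧ posIdx p (i : ℕ) = posIdx p (j : ℕ) + 1 then
      α (blkIdx p (i : ℕ))
    else if blkIdx p (j : ℕ) ≠ 0 ∧ blkIdx p (i : ℕ) = 0 ∧ posIdx p (j : ℕ) = 0 ∧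
        posIdx p (i : ℕ) ≤ 1 then
      -α 0
    else 0

/-!
Write `m = j + 1` for the (0-based) row or column `j`. Block `b` consists of the `m` with
`m / p = b`, which gives the closed form `lmat_apply`: `α_{m/p}` at position `(m + 1, m)` unless
`p ∣ m + 1`, and `-α_1` in rows `0, 1` of the columns with `p ∣ m`. So the `k` columns with
`p ∣ j + 2`, the last column of each block, vanish; this is the upper bound. If `α_b = 0`, the
column `j = b p` vanishes as well and the bound is strict. If every `α_b ≠ 0`, the rows `j + 1`
and columns `j` with `p ∤ j + 2` form an upper triangular submatrix with diagonal entries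
`α_{(j+2)/p} ≠ 0`, so the bound is attained.
-/

open Finset Matrix

section Indices

variable {p : ℕ}

lemma blkIdx_eq_div (hp : 0 < p) (j : ℕ) : blkIdx p j = (j + 1) / p := by
  unfold blkIdx
  split_ifs with h
  · exact (Nat.div_eq_of_lt (by omega)).symm
  · rw [Nat.div_eq_sub_div (a := j + 1) hp (by omega)]
    congr 2
    omega

lemma posIdx_of_lt {j : ℕ} (h : j + 1 < p) : posIdx p j = j := by
  simp [posIdx, show j < p - 1 by omega]

lemma posIdx_of_le (hp : 0 < p) {j : ℕ} (h : p ≤ j + 1) : posIdx p j = (j + 1) % p := by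
  rw [posIdx, if_neg (by omega), Nat.mod_eq_sub_mod (a := j + 1) h,
    show j + 1 - p = j - (p - 1) by omega]

lemma blkIdx_eq_and_posIdx_eq_succ_iff (hp : 0 < p) (i j : ℕ) :
    blkIdx p i = blkIdx p j ∧ posIdx p i = posIdx p j + 1 ↔ i = j + 1 ∧ ¬ p ∣ i + 1 := by
  have hi := Nat.div_add_mod (i + 1) p
  have hj := Nat.div_add_mod (j + 1) p
  rw [blkIdx_eq_div hp, blkIdx_eq_div hp, Nat.dvd_iff_mod_eq_zero]
  constructor
  · rintro ⟨hq, hr⟩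
    rw [hq] at hi
    rcases lt_or_ge (i + 1) p with hip | hip
    · have hjp : j + 1 < p := by
        rw [← Nat.div_eq_zero_iff_lt hp, ← hq, Nat.div_eq_zero_iff_lt hp]; exact hip
      rw [posIdx_of_lt hip, posIdx_of_lt hjp] at hr
      exact ⟨hr, by rw [Nat.mod_eq_of_lt hip]; omega⟩
    · have hjp : p ≤ j + 1 := by
        by_contra hjp
        rw [Nat.div_eq_of_lt (by omega : j + 1 < p), Nat.div_eq_zero_iff_lt hp] at hq
        omega
      rw [posIdx_of_le hp hip, posIdx_of_le hp hjp] at hr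
      omega
  · rintro ⟨rfl, hr⟩
    have hq : (j + 1 + 1) / p = (j + 1) / p :=
      Nat.succ_div_of_not_dvd (by rwa [Nat.dvd_iff_mod_eq_zero])
    rw [hq] at hi
    refine ⟨hq, ?_⟩
    rcases lt_or_ge (j + 1 + 1) p with hip | hip
    · rw [posIdx_of_lt hip, posIdx_of_lt (by omega)]
    · have hjp : p ≤ j + 1 := by
        by_contra hjp
        rw [show j + 1 + 1 = p by omega, Nat.mod_self] at hr
        exact hr rfl
      rw [posIdx_of_le hp hip, posIdx_of_le hp hjp]
      omega

lemma blkIdx_ne_zero_and_posIdx_eq_zero_iff (hp : 0 < p) (j : ℕ) :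
    blkIdx p j ≠ 0 ∧ posIdx p j = 0 ↔ p ∣ j + 1 := by
  rw [blkIdx_eq_div hp, Ne, Nat.div_eq_zero_iff_lt hp, not_lt]
  constructor
  · rintro ⟨hjp, hr⟩
    rw [posIdx_of_le hp hjp] at hr
    exact Nat.dvd_of_mod_eq_zero hr
  · intro hdvd
    have hjp := Nat.le_of_dvd (Nat.succ_pos j) hdvd
    exact ⟨hjp, by rw [posIdx_of_le hp hjp]; exact Nat.mod_eq_zero_of_dvd hdvd⟩

lemma blkIdx_eq_zero_and_posIdx_le_one_iff (hp : 3 ≤ p) (i : ℕ) :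
    blkIdx p i = 0 ∧ posIdx p i ≤ 1 ↔ i ≤ 1 := by
  rw [blkIdx_eq_div (by omega), Nat.div_eq_zero_iff_lt (by omega)]
  constructor
  · rintro ⟨hip, hr⟩
    rwa [posIdx_of_lt hip] at hr
  · intro hi
    exact ⟨by omega, by rwa [posIdx_of_lt (by omega)]⟩

end Indices

theorem Matrix.rank_le_card_of_col_support_subset {m n R : Type*} [Fintype m] [Fintype n]
    [Field R] (A : Matrix m n R) (s : Finset n) (hz : Function.support A.col ⊆ s) :
    A.rank ≤ #s := by
  rw [← rank_transpose]
  exact rank_le_card_of_support_subset Aᵀ s hz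

def nonLastCols (p n : ℕ) : Finset (Fin n) := {j | ¬ p ∣ (j : ℕ) + 2}

section Counting

variable {p k : ℕ}

lemma card_filter_dvd_add_two (hp : 2 ≤ p) (hk : 1 ≤ k) :
    #{j : Fin (k * p - 1) | p ∣ (j : ℕ) + 2} = k := by
  have hkp : k * p - 1 + 1 = k * p :=
    Nat.sub_add_cancel (Nat.one_le_iff_ne_zero.mpr (Nat.mul_ne_zero (by omega) (by omega)))
  have hcount := Nat.count_succ' (fun e => p ∣ e + 1) (k * p - 1)
  rw [hkp, Nat.count_eq_card_filter_range, Nat.card_multiples, Nat.mul_div_cancel _ (by omega),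
    zero_add, if_neg (Nat.dvd_one.not.mpr (by omega)), add_zero,
    Nat.count_eq_card_filter_range, ← Nat.Iio_eq_range, ← Fin.map_valEmbedding_univ,
    Finset.filter_map, card_map] at hcount
  exact hcount.symm

lemma card_nonLastCols (hp : 2 ≤ p) (hk : 1 ≤ k) :
    #(nonLastCols p (k * p - 1)) = (k - 1) * (p - 1) + (p - 2) := by
  have hsplit := card_filter_add_card_filter_not (s := (univ : Finset (Fin (k * p - 1))))
    (fun j => p ∣ (j : ℕ) + 2)
  rw [card_filter_dvd_add_two hp hk, card_univ, Fintype.card_fin] at hsplit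
  rw [nonLastCols]
  obtain ⟨k, rfl⟩ := Nat.exists_eq_add_of_le' hk
  obtain ⟨p, rfl⟩ := Nat.exists_eq_add_of_le' hp
  have h1 : (k + 1) * (p + 2) = k * p + 2 * k + p + 2 := by ring
  have h2 : (k + 1 - 1) * (p + 2 - 1) = k * p + k := by
    rw [Nat.add_sub_cancel, Nat.add_sub_assoc one_le_two]; ring
  omega

end Counting

section Lmat

variable {F : Type*} [Field F] {p k : ℕ} {α : ℕ → F}

lemma lmat_apply (hp : 3 ≤ p) (i j : Fin (k * p - 1)) :
    Lmat F p k α i j =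
      if (i : ℕ) = j + 1 ∧ ¬ p ∣ i + 1 then α ((i + 1) / p)
      else if p ∣ j + 1 ∧ (i : ℕ) ≤ 1 then -α 0 else 0 := by
  have hp0 : 0 < p := by omega
  have hcorner : blkIdx p j ≠ 0 ∧ blkIdx p i = 0 ∧ posIdx p j = 0 ∧ posIdx p i ≤ 1 ↔
      p ∣ j + 1 ∧ (i : ℕ) ≤ 1 := by
    rw [← blkIdx_ne_zero_and_posIdx_eq_zero_iff hp0 j,
      ← blkIdx_eq_zero_and_posIdx_le_one_iff hp i]
    tauto
  exact if_congr (blkIdx_eq_and_posIdx_eq_succ_iff hp0 i j) (by rw [blkIdx_eq_div hp0])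
    (if_congr hcorner rfl rfl)

lemma lmat_apply_of_dvd (hp : 3 ≤ p) (i j : Fin (k * p - 1)) (hj : p ∣ (j : ℕ) + 2) :
    Lmat F p k α i j = 0 := by
  have hj1 : ¬ p ∣ (j : ℕ) + 1 := fun h =>
    absurd (Nat.le_of_dvd one_pos ((Nat.dvd_add_right h).mp hj)) (by omega)
  rw [lmat_apply hp, if_neg (fun h => h.2 (by rwa [h.1])), if_neg (fun h => hj1 h.1)]

lemma lmat_apply_mul_eq_zero (hp : 3 ≤ p) {b : ℕ} (hb : b * p < k * p - 1) (hα : α b = 0)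
    (i : Fin (k * p - 1)) : Lmat F p k α i ⟨b * p, hb⟩ = 0 := by
  have hdiv : (b * p + 1 + 1) / p = b := by
    rw [add_assoc, add_comm, mul_comm, Nat.add_mul_div_left _ _ (by omega),
      Nat.div_eq_of_lt (by omega), zero_add]
  have hndvd : ¬ p ∣ b * p + 1 := fun h =>
    absurd (Nat.le_of_dvd one_pos ((Nat.dvd_add_right (dvd_mul_left p b)).mp h)) (by omega)
  rw [lmat_apply hp]
  split_ifs with h1 h2
  · rw [h1.1, hdiv, hα]
  · exact absurd h2.1 hndvd
  · rfl

lemma add_two_lt_of_mem_nonLastCols {j : Fin (k * p - 1)} (hj : j ∈ nonLastCols p (k * p - 1)) :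
    (j : ℕ) + 2 < k * p := by
  have hne : (j : ℕ) + 2 ≠ k * p := fun h =>
    (mem_filter.mp hj).2 (by rw [h]; exact dvd_mul_left p k)
  have := j.isLt
  omega

lemma lmat_succ_apply (hp : 3 ≤ p) (i j : Fin (k * p - 1)) (hi : i ∈ nonLastCols p (k * p - 1)) :
    Lmat F p k α ⟨i + 1, by have := add_two_lt_of_mem_nonLastCols hi; omega⟩ j =
      if i = j then α ((i + 2) / p) else if p ∣ j + 1 ∧ (i : ℕ) = 0 then -α 0 else 0 := by
  have hndvd : ¬ p ∣ (i : ℕ) + 2 := (mem_filter.mp hi).2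
  rw [lmat_apply hp]
  refine if_congr ?_ rfl (if_congr (by simp) rfl rfl)
  simp only [Nat.add_right_cancel_iff, Fin.val_inj, hndvd, not_false_eq_true, and_true]

lemma lmat_rank_le (hp : 3 ≤ p) (α : ℕ → F) :
    (Lmat F p k α).rank ≤ #(nonLastCols p (k * p - 1)) := by
  refine rank_le_card_of_col_support_subset _ _ fun j hj => ?_
  by_contra hjS
  exact hj (funext fun i => lmat_apply_of_dvd hp i j (by simpa [nonLastCols] using hjS))

lemma lmat_rank_lt (hp : 3 ≤ p) {b : ℕ} (hb : b < k) (hα : α b = 0) :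
    (Lmat F p k α).rank < #(nonLastCols p (k * p - 1)) := by
  have hbk : b * p < k * p - 1 := by
    have : (b + 1) * p ≤ k * p := Nat.mul_le_mul_right p hb
    rw [Nat.succ_mul] at this
    omega
  have hmem : (⟨b * p, hbk⟩ : Fin (k * p - 1)) ∈ nonLastCols p (k * p - 1) := by
    refine mem_filter.mpr ⟨mem_univ _, fun h => ?_⟩
    exact absurd (Nat.le_of_dvd two_pos ((Nat.dvd_add_right (dvd_mul_left p b)).mp h)) (by omega)
  refine lt_of_le_of_lt (rank_le_card_of_col_support_subset _ _ fun j hj => ?_)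
    (card_erase_lt_of_mem hmem)
  by_contra hjS
  apply hj
  funext i
  by_cases hjb : j = ⟨b * p, hbk⟩
  · subst hjb
    exact lmat_apply_mul_eq_zero hp hbk hα i
  · exact lmat_apply_of_dvd hp i j (by simpa [nonLastCols, hjb] using hjS)

lemma lmat_rank_eq (hp : 3 ≤ p) (hα : ∀ b < k, α b ≠ 0) :
    (Lmat F p k α).rank = #(nonLastCols p (k * p - 1)) := by
  set S := nonLastCols p (k * p - 1)
  let T : Matrix S S F := (Lmat F p k α).submatrix
    (fun i => ⟨i + 1, by have := add_two_lt_of_mem_nonLastCols i.2; omega⟩) (↑)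
  have hT : T.IsUpperTriangular := by
    intro i j hji
    have hij : (i : Fin (k * p - 1)) ≠ j := fun h => hji.ne' (Subtype.ext h)
    have hi0 : ((i : Fin (k * p - 1)) : ℕ) ≠ 0 := by
      have : ((j : Fin (k * p - 1)) : ℕ) < i := hji
      omega
    simp only [T, submatrix_apply, lmat_succ_apply hp _ _ i.2, if_neg hij, hi0, and_false, if_false]
  have hdet : T.det ≠ 0 := by
    rw [det_of_isUpperTriangular hT]
    refine prod_ne_zero_iff.mpr fun i _ => ?_
    simp only [T, submatrix_apply, lmat_succ_apply hp _ _ i.2]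
    exact hα _ ((Nat.div_lt_iff_lt_mul (by omega)).mpr (add_two_lt_of_mem_nonLastCols i.2))
  refine le_antisymm (lmat_rank_le hp α) ?_
  calc #S = T.rank := by rw [rank_of_det_ne_zero hdet, Fintype.card_coe]
    _ ≤ (Lmat F p k α).rank := rank_submatrix_le _ _ _

end Lmat

theorem stmt14_general (F : Type*) [Field F] (p k : ℕ) (hp : p.Prime) (hodd : Odd p)
    (hk : 2 ≤ k) (α : ℕ → F) :
    (Lmat F p k α).rank ≤ (k - 1) * (p - 1) + (p - 2) ∧
    ((Lmat F p k α).rank = (k - 1) * (p - 1) + (p - 2) ↔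
      ∏ i ∈ Finset.range k, α i ≠ 0) := by
  have hp3 : 3 ≤ p := by
    obtain ⟨m, rfl⟩ := hodd
    have := hp.two_le
    omega
  rw [← card_nonLastCols (by omega) (by omega : 1 ≤ k), prod_ne_zero_iff]
  refine ⟨lmat_rank_le hp3 α, fun hrank b hb hαb => ?_, fun hα => lmat_rank_eq hp3 ?_⟩
  · exact (lmat_rank_lt hp3 (mem_range.mp hb) hαb).ne hrank
  · exact fun b hb => hα b (mem_range.mpr hb)

/-- Let `p` be an odd prime, `k ≥ 2`, `F` of characteristic `p`, and `L` the
block matrix described above.  Then `rank(L) ≤ (k-1)(p-1) + (p-2)`, with equality if and only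
if `α_1 α_2 ⋯ α_k ≠ 0`. -/
theorem stmt14 (F : Type*) [Field F] (p k : ℕ) [CharP F p] (hp : p.Prime) (hodd : Odd p)
    (hk : 2 ≤ k) (α : ℕ → F) :
    (Lmat F p k α).rank ≤ (k - 1) * (p - 1) + (p - 2) ∧
    ((Lmat F p k α).rank = (k - 1) * (p - 1) + (p - 2) ↔
      ∏ i ∈ Finset.range k, α i ≠ 0) :=
  stmt14_general F p k hp hodd hk α
end

section
/- For k ≥ 2 and p an odd prime, the intersection of V(p_k) with V(x_1 x_2 ⋯ x_k) in A^k(F) equals the union over all pairs 1 ≤ i ≠ j ≤ k of the codimension-2 coordinate subspaces V(x_i, x_j). -/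
section ErasedProducts

variable {ι R : Type*} [Fintype ι] [DecidableEq ι]

theorem prod_erase_pow_eq_zero_iff [CommMonoidWithZero R] [NoZeroDivisors R] [Nontrivial R]
    {n : ℕ} (hn : n ≠ 0) (x : ι → R) (i : ι) :
    ∏ j ∈ Finset.univ.erase i, x j ^ n = 0 ↔ ∃ j, j ≠ i ∧ x j = 0 := by
  simp [Finset.prod_eq_zero_iff, pow_eq_zero_iff hn]

/-- Once `x m = 0`, every summand except the `m`-th contains the factor `x m ^ n`. -/
theorem sum_prod_erase_pow_of_eq_zero [CommSemiring R] {n : ℕ} (hn : n ≠ 0) {x : ι → R}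
    {m : ι} (hm : x m = 0) :
    ∑ i, ∏ j ∈ Finset.univ.erase i, x j ^ n = ∏ j ∈ Finset.univ.erase m, x j ^ n := by
  refine Finset.sum_eq_single m (fun i _ hi => ?_) (by simp)
  exact Finset.prod_eq_zero (Finset.mem_erase.mpr ⟨Ne.symm hi, Finset.mem_univ m⟩)
    (by rw [hm, zero_pow hn])

theorem sum_prod_erase_pow_eq_zero_and_prod_eq_zero_iff [CommSemiring R] [NoZeroDivisors R]
    [Nontrivial R] {n : ℕ} (hn : n ≠ 0) (x : ι → R) :
    (∑ i, ∏ j ∈ Finset.univ.erase i, x j ^ n) = 0 ∧ ∏ i, x i = 0 ↔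
      ∃ i j, i ≠ j ∧ x i = 0 ∧ x j = 0 := by
  constructor
  · rintro ⟨hsum, hprod⟩
    obtain ⟨m, -, hm⟩ := Finset.prod_eq_zero_iff.mp hprod
    rw [sum_prod_erase_pow_of_eq_zero hn hm, prod_erase_pow_eq_zero_iff hn] at hsum
    obtain ⟨j, hjm, hj⟩ := hsum
    exact ⟨m, j, hjm.symm, hm, hj⟩
  · rintro ⟨i, j, hij, hi, hj⟩
    refine ⟨?_, Finset.prod_eq_zero (Finset.mem_univ i) hi⟩
    rw [sum_prod_erase_pow_of_eq_zero hn hi, prod_erase_pow_eq_zero_iff hn]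
    exact ⟨j, hij.symm, hj⟩

end ErasedProducts

theorem stmt18_general (F : Type*) [Field F] (p k : ℕ) (hp : p.Prime) :
    {x : Fin k → F | (∑ i : Fin k, ∏ j ∈ Finset.univ.erase i, x j ^ (p - 1)) = 0} ∩
        {x : Fin k → F | (∏ i : Fin k, x i) = 0} =
      ⋃ (i : Fin k) (j : Fin k) (_ : i ≠ j), {x : Fin k → F | x i = 0 ∧ x j = 0} := by
  have hp1 : p - 1 ≠ 0 := Nat.sub_ne_zero_of_lt hp.one_lt
  ext x
  simp only [Set.mem_inter_iff, Set.mem_ofPred_eq, Set.mem_iUnion, exists_prop]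
  exact sum_prod_erase_pow_eq_zero_and_prod_eq_zero_iff hp1 x

/-- For `k ≥ 2` and `p` an odd prime, over an algebraically closed field `F`
of characteristic `p`, the intersection of `V(p_k)` (where
`p_k = Σ_{i=1}^{k} (x_1 ⋯ x̂_i ⋯ x_k)^{p-1}`) with `V(x_1 x_2 ⋯ x_k)` in `𝔸^k(F)` equals the
union over all pairs `1 ≤ i ≠ j ≤ k` of the codimension-2 coordinate subspaces
`V(x_i, x_j)`. -/
theorem stmt18 (F : Type*) [Field F] [IsAlgClosed F] (p k : ℕ) [CharP F p] (hp : p.Prime)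
    (hodd : Odd p) (hk : 2 ≤ k) :
    {x : Fin k → F | (∑ i : Fin k, ∏ j ∈ Finset.univ.erase i, x j ^ (p - 1)) = 0} ∩
        {x : Fin k → F | (∏ i : Fin k, x i) = 0} =
      ⋃ (i : Fin k) (j : Fin k) (_ : i ≠ j), {x : Fin k → F | x i = 0 ∧ x j = 0} :=
  stmt18_general F p k hp
end
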